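/- arXiv:2507.11648 — 3 statements merged into one kernel-verified Lean document; each statement's English description precedes it below -/
import Mathlib

section
/- For every real r with |r| < 1, the complete elliptic integral of the first kind satisfies K(r) = ∫₀¹ dt/√((1−t²)(1−r²t²)) = (π/2)·Σ_{n=0}^∞ [((1/2)_n)² / ((1)_n · n!)] · r^{2n}, i.e. K(r) = (π/2)·₂F₁(1/2, 1/2; 1; r²), where the series on the right converges. -/
/-- The complete elliptic integral of the first kind `K(r)`. -/
noncomputable def ellK (r : ℝ) : ℝ :=
  ∫ t in (0:ℝ)..1, 1 / Real.sqrt ((1 - t ^ 2) * (1 - r ^ 2 * t ^ 2))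

/-- The Pochhammer symbol `(q)_n = q(q+1)⋯(q+n−1)`, with `(q)_0 = 1`. -/
noncomputable def poch (q : ℝ) (n : ℕ) : ℝ :=
  ∏ i ∈ Finset.range n, (q + i)

/-!
Substituting `t = sin θ` gives `K(r) = ∫₀^{π/2} (1 - r² sin² θ)^{-1/2} dθ`. Expanding the integrand
by the binomial series `(1 - x)^{-1/2} = ∑ ((1/2)ₙ / n!) xⁿ` and integrating termwise (the terms
are dominated by the convergent series at `sin θ = 1`), each term contributes, by Wallis' formula
`∫₀^{π/2} sin^{2n} θ dθ = (π/2) (1/2)ₙ / n!`, the coefficient `(π/2) ((1/2)ₙ / n!)² r^{2n}`.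
-/

open Real MeasureTheory Set intervalIntegral
open scoped Nat

lemma poch_eq_ascPochhammer_eval (q : ℝ) (n : ℕ) : poch q n = (ascPochhammer ℝ n).eval q := by
  induction n with
  | zero => simp [poch]
  | succ n ih => rw [poch, Finset.prod_range_succ, ← poch, ih, ascPochhammer_succ_eval]

lemma poch_one (n : ℕ) : poch 1 n = n ! := by
  rw [poch_eq_ascPochhammer_eval, ← Nat.cast_one, ascPochhammer_nat_eq_natCast_ascFactorial]
  simp

lemma poch_pos {q : ℝ} (hq : 0 < q) (n : ℕ) : 0 < poch q n :=
  Finset.prod_pos fun i _ => by positivity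

noncomputable def invSqrtCoeff (n : ℕ) : ℝ := poch (1/2) n / n !

lemma invSqrtCoeff_nonneg (n : ℕ) : 0 ≤ invSqrtCoeff n :=
  div_nonneg (poch_pos one_half_pos n).le (by positivity)

lemma invSqrtCoeff_succ (n : ℕ) :
    invSqrtCoeff (n + 1) * (n + 1) = (n + 1/2) * invSqrtCoeff n := by
  rw [invSqrtCoeff, invSqrtCoeff, poch, Finset.prod_range_succ, ← poch, Nat.factorial_succ]
  push_cast
  field_simp
  ring

lemma invSqrtCoeff_eq_choose (n : ℕ) : invSqrtCoeff n = Ring.choose ((1/2 : ℝ) + n - 1) n := by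
  rw [Ring.choose_eq_smul, Polynomial.descPochhammer_smeval_eq_ascPochhammer,
    Polynomial.ascPochhammer_smeval_eq_eval, invSqrtCoeff, poch_eq_ascPochhammer_eval,
    smul_eq_mul, inv_mul_eq_div]
  ring_nf

lemma hasSum_invSqrtCoeff_mul_pow {x : ℝ} (hx : |x| < 1) :
    HasSum (fun n => invSqrtCoeff n * x ^ n) (1 / √(1 - x)) := by
  have h := (one_div_one_sub_rpow_hasFPowerSeriesOnBall_zero (1/2)).hasSum
    (y := x) (by simpa [enorm_eq_nnnorm, ← NNReal.coe_lt_coe] using hx)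
  simp only [FormalMultilinearSeries.ofScalars_apply_eq, smul_eq_mul, zero_add, ← sqrt_eq_rpow,
    ← invSqrtCoeff_eq_choose] at h
  simpa only [mul_comm] using h

lemma integral_sin_pow_two_mul (n : ℕ) :
    ∫ x in (0:ℝ)..(π/2), sin x ^ (2 * n) = π/2 * invSqrtCoeff n := by
  induction n with
  | zero => simp [invSqrtCoeff, poch]
  | succ k ih =>
    rw [show 2 * (k + 1) = 2 * k + 2 by ring, integral_sin_pow, ih, sin_zero, cos_pi_div_two]
    have hk : (k : ℝ) + 1 ≠ 0 := by positivity
    have h := invSqrtCoeff_succ k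
    push_cast
    field_simp
    linear_combination (-2 * π) * h

lemma sin_image_Ioo : sin '' Ioo 0 (π/2) = Ioo 0 1 := by
  ext y
  constructor
  · rintro ⟨θ, ⟨hθ0, hθ1⟩, rfl⟩
    refine ⟨sin_pos_of_pos_of_lt_pi hθ0 (by linarith [pi_pos]), ?_⟩
    simpa using sin_lt_sin_of_lt_of_le_pi_div_two (by linarith [pi_pos]) le_rfl hθ1
  · rintro ⟨hy0, hy1⟩
    exact ⟨arcsin y, ⟨arcsin_pos.2 hy0, arcsin_lt_pi_div_two.2 hy1⟩,
      sin_arcsin (by linarith) hy1.le⟩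

/-- The substitution `t = sin θ`, in the measure-theoretic form that needs neither continuity
nor integrability of the integrand (which blows up at `t = 1`). -/
lemma ellK_eq_integral_sin (r : ℝ) :
    ellK r = ∫ θ in (0:ℝ)..(π/2), 1 / √(1 - r ^ 2 * sin θ ^ 2) := by
  rw [ellK, integral_of_le zero_le_one, integral_of_le (by positivity),
    integral_Ioc_eq_integral_Ioo, integral_Ioc_eq_integral_Ioo, ← sin_image_Ioo,
    integral_image_eq_integral_abs_deriv_smul measurableSet_Ioo
      (fun θ _ => (hasDerivAt_sin θ).hasDerivWithinAt)
      (injOn_sin.mono fun θ hθ => mem_Icc.2 ⟨by linarith [hθ.1, pi_pos], hθ.2.le⟩)]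
  refine setIntegral_congr_fun measurableSet_Ioo fun θ hθ => ?_
  have hcos : 0 < cos θ := cos_pos_of_mem_Ioo ⟨by linarith [hθ.1, pi_pos], hθ.2⟩
  rw [smul_eq_mul, abs_of_pos hcos, ← cos_sq', sqrt_mul (by positivity), sqrt_sq hcos.le]
  field_simp

lemma hasSum_ellK {r : ℝ} (hr : |r| < 1) :
    HasSum (fun n => π/2 * (invSqrtCoeff n ^ 2 * (r ^ 2) ^ n)) (ellK r) := by
  have hr2 : r ^ 2 < 1 := by rwa [sq_lt_one_iff_abs_lt_one]
  have hexpand (θ : ℝ) : HasSum (fun n => invSqrtCoeff n * (r ^ 2) ^ n * sin θ ^ (2 * n))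
      (1 / √(1 - r ^ 2 * sin θ ^ 2)) := by
    have hx : |r ^ 2 * sin θ ^ 2| < 1 := by
      rw [abs_of_nonneg (by positivity)]
      nlinarith [sin_sq_le_one θ, sq_nonneg r]
    simpa only [pow_mul, mul_pow, mul_assoc] using hasSum_invSqrtCoeff_mul_pow hx
  have hbound (n : ℕ) (θ : ℝ) :
      ‖invSqrtCoeff n * (r ^ 2) ^ n * sin θ ^ (2 * n)‖ ≤ invSqrtCoeff n * (r ^ 2) ^ n := by
    have hc : 0 ≤ invSqrtCoeff n * (r ^ 2) ^ n := by have := invSqrtCoeff_nonneg n; positivity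
    rw [norm_mul, norm_of_nonneg hc, norm_pow, norm_eq_abs, pow_mul, sq_abs]
    exact mul_le_of_le_one_right hc (pow_le_one₀ (sq_nonneg _) (sin_sq_le_one θ))
  have hterm (n : ℕ) : ∫ θ in (0:ℝ)..(π/2), invSqrtCoeff n * (r ^ 2) ^ n * sin θ ^ (2 * n) =
      π/2 * (invSqrtCoeff n ^ 2 * (r ^ 2) ^ n) := by
    rw [intervalIntegral.integral_const_mul, integral_sin_pow_two_mul]
    ring
  have h : HasSum (fun n => ∫ θ in (0:ℝ)..(π/2), invSqrtCoeff n * (r ^ 2) ^ n * sin θ ^ (2 * n))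
      (∫ θ in (0:ℝ)..(π/2), 1 / √(1 - r ^ 2 * sin θ ^ 2)) :=
    hasSum_integral_of_dominated_convergence (fun n _ => invSqrtCoeff n * (r ^ 2) ^ n)
      (fun n => (by fun_prop : Continuous _).aestronglyMeasurable)
      (fun n => ae_of_all _ fun θ _ => hbound n θ)
      (ae_of_all _ fun _ _ => (hasSum_invSqrtCoeff_mul_pow (by rwa [abs_sq])).summable)
      intervalIntegrable_const (ae_of_all _ fun θ _ => hexpand θ)
  simpa only [hterm, ← ellK_eq_integral_sin] using h

/-- `K(r) = (π/2)·₂F₁(1/2,1/2;1;r²)` for `|r| < 1`, with the hypergeometric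
series converging. -/
theorem ellK_eq_hypergeometric (r : ℝ) (hr : |r| < 1) :
    Summable (fun n : ℕ =>
      (poch (1/2) n) ^ 2 / (poch 1 n * (Nat.factorial n : ℝ)) * r ^ (2 * n)) ∧
    ellK r = Real.pi / 2 * ∑' n : ℕ,
      (poch (1/2) n) ^ 2 / (poch 1 n * (Nat.factorial n : ℝ)) * r ^ (2 * n) := by
  have hcoeff (n : ℕ) : poch (1/2) n ^ 2 / (poch 1 n * n !) * r ^ (2 * n) =
      invSqrtCoeff n ^ 2 * (r ^ 2) ^ n := by
    rw [poch_one, invSqrtCoeff, div_pow, pow_mul]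
    ring
  simp only [hcoeff]
  have h := hasSum_ellK hr
  refine ⟨(summable_mul_left_iff (by positivity)).1 h.summable, ?_⟩
  rw [← tsum_mul_left, h.tsum_eq]
end

section
/- Let η : ℝ → ℂ be twice differentiable at the point t with η′(t) ≠ 0, and let A : ℝ → ℂ be differentiable at t with A(t) ≠ 0. Then the generalized Neumann kernel N(s,t) = (1/π)·Im[(A(s)/A(t))·η′(t)/(η(t)−η(s))] extends continuously to s = t; more precisely, lim_{s→t, s≠t} (1/π)·Im[(A(s)/A(t))·η′(t)/(η(t)−η(s))] = (1/π)·[(1/2)·Im(η″(t)/η′(t)) − Im(A′(t)/A(t))]. -/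
open Filter Topology Asymptotics

/-!
The term `1 / (s - t)` is real, so adding it to the complex kernel
`K(s) = (A(s)/A(t))·η′(t)/(η(t) − η(s))` leaves `Im K` unchanged while cancelling its pole.
With `D = η(s) − η(t)` and `h = s − t`,
`K + 1/h = ((D − h·η′(t))/h²)·(h/D) − η′(t)·((A(s) − A(t))/h)/A(t)·(h/D)`,
and the second-order Taylor expansion of `η` at `t` sends this to `η″/(2η′(t)) − A′/A(t)`.
-/

theorem taylor_two_isLittleO_of_hasDerivAt {E : Type*} [NormedAddCommGroup E] [NormedSpace ℝ E]
    {f f' : ℝ → E} {f'' : E} {x₀ : ℝ}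
    (hf : ∀ᶠ x in 𝓝 x₀, HasDerivAt f (f' x) x) (hf' : HasDerivAt f' f'' x₀) :
    (fun x ↦ f x - f x₀ - (x - x₀) • f' x₀ - ((x - x₀) ^ 2 / 2) • f'')
      =o[𝓝 x₀] fun x ↦ (x - x₀) ^ 2 := by
  obtain ⟨ε, hε, hball⟩ := Metric.eventually_nhds_iff_ball.mp hf
  have hnhds : 𝓝[Metric.ball x₀ ε] x₀ = 𝓝 x₀ :=
    nhdsWithin_eq_nhds.mpr (Metric.ball_mem_nhds x₀ hε)
  have hderiv : ∀ x ∈ Metric.ball x₀ ε, HasDerivWithinAt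
      (fun x ↦ f x - (x - x₀) • f' x₀ - ((x - x₀) ^ 2 / 2) • f'')
      (f' x - f' x₀ - (x - x₀) • f'') (Metric.ball x₀ ε) x := by
    intro x hx
    have hlin := ((hasDerivAt_id x).sub_const x₀).smul_const (f' x₀)
    have hquad := ((((hasDerivAt_id x).sub_const x₀).pow 2).div_const 2).smul_const f''
    refine (((hball x hx).sub hlin).sub hquad).hasDerivWithinAt.congr_deriv ?_
    norm_num
  have h := Convex.isLittleO_pow_succ_real (n := 1) (convex_ball x₀ ε)
    (Metric.mem_ball_self hε) hderiv (by simpa [hnhds] using hasDerivAt_iff_isLittleO.mp hf')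
  rw [hnhds] at h
  refine h.congr_left fun x ↦ ?_
  simp only [sub_self, zero_smul, ne_eq, OfNat.ofNat_ne_zero, not_false_eq_true, zero_pow,
    zero_div, sub_zero]
  abel

theorem HasDerivAt.tendsto_div_ofReal_sub {f : ℝ → ℂ} {f' : ℂ} {t : ℝ}
    (hf : HasDerivAt f f' t) :
    Tendsto (fun s : ℝ ↦ (f s - f t) / ((s : ℂ) - t)) (𝓝[≠] t) (𝓝 f') :=
  (hasDerivAt_iff_tendsto_slope.mp hf).congr fun s ↦ by
    simp [slope_def_module, Complex.real_smul, div_eq_inv_mul]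

theorem tendsto_taylor_two_div_sq {η η' : ℝ → ℂ} {η'' : ℂ} {t : ℝ}
    (hη : ∀ᶠ s in 𝓝 t, HasDerivAt η (η' s) s) (hη2 : HasDerivAt η' η'' t) :
    Tendsto (fun s : ℝ ↦ (η s - η t - ((s : ℂ) - t) * η' t) / ((s : ℂ) - t) ^ 2)
      (𝓝[≠] t) (𝓝 (η'' / 2)) := by
  have hrem := (taylor_two_isLittleO_of_hasDerivAt hη hη2).mono (nhdsWithin_le_nhds (s := {t}ᶜ))
  have hrem' : (fun s : ℝ ↦ η s - η t - ((s : ℂ) - t) * η' t - ((s : ℂ) - t) ^ 2 / 2 * η'')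
      =o[𝓝[≠] t] fun s : ℝ ↦ ((s : ℂ) - t) ^ 2 := by
    rw [← isLittleO_norm_right]
    convert! hrem.norm_right using 2 with s
    · simp [Complex.real_smul]
    · simp [← Complex.ofReal_sub, Complex.norm_real]
  have hlim := hrem'.tendsto_div_nhds_zero.add_const (η'' / 2)
  rw [zero_add] at hlim
  refine hlim.congr' ?_
  filter_upwards [self_mem_nhdsWithin] with s hs
  have hst : (s : ℂ) - t ≠ 0 := sub_ne_zero.mpr (Complex.ofReal_injective.ne hs)
  field_simp
  ring

theorem neumann_kernel_add_inv_eq {a b e h D : ℂ} (hb : b ≠ 0) (hh : h ≠ 0) (hD : D ≠ 0) :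
    a / b * e / -D + 1 / h = (D - h * e) / h ^ 2 * (h / D) - e * ((a - b) / h / b) * (h / D) := by
  field_simp
  ring

theorem tendsto_neumann_kernel_add_inv_sub {η η' A : ℝ → ℂ} {η'' A' : ℂ} {t : ℝ}
    (hη : ∀ᶠ s in 𝓝 t, HasDerivAt η (η' s) s) (hη2 : HasDerivAt η' η'' t) (hη0 : η' t ≠ 0)
    (hA : HasDerivAt A A' t) (hA0 : A t ≠ 0) :
    Tendsto (fun s : ℝ ↦ (A s / A t) * η' t / (η t - η s) + 1 / ((s : ℂ) - t)) (𝓝[≠] t)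
      (𝓝 (η'' / (2 * η' t) - A' / A t)) := by
  have hslope := hη.self_of_nhds.tendsto_div_ofReal_sub
  have hinv : Tendsto (fun s : ℝ ↦ ((s : ℂ) - t) / (η s - η t)) (𝓝[≠] t) (𝓝 (η' t)⁻¹) :=
    (hslope.inv₀ hη0).congr fun s ↦ inv_div _ _
  have hlim := ((tendsto_taylor_two_div_sq hη hη2).mul hinv).sub
    (((tendsto_const_nhds (x := η' t)).mul (hA.tendsto_div_ofReal_sub.div_const (A t))).mul hinv)
  rw [show η'' / 2 * (η' t)⁻¹ - η' t * (A' / A t) * (η' t)⁻¹ = η'' / (2 * η' t) - A' / A t by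
    field_simp] at hlim
  refine hlim.congr' ?_
  filter_upwards [hslope.eventually_ne hη0, self_mem_nhdsWithin] with s hslope_ne hs
  have hst : (s : ℂ) - t ≠ 0 := sub_ne_zero.mpr (Complex.ofReal_injective.ne hs)
  rw [← neg_sub (η s), neumann_kernel_add_inv_eq hA0 hst (left_ne_zero_of_mul hslope_ne)]

/-- The generalized Neumann kernel `N(s,t) = (1/π)·Im[(A(s)/A(t))·η′(t)/(η(t)−η(s))]`
extends continuously to `s = t`, with limit
`(1/π)·[(1/2)·Im(η″(t)/η′(t)) − Im(A′(t)/A(t))]`. -/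
theorem neumann_kernel_diagonal_limit
    (η η' : ℝ → ℂ) (η'' : ℂ) (A : ℝ → ℂ) (A' : ℂ) (t : ℝ)
    (hη : ∀ᶠ s in 𝓝 t, HasDerivAt η (η' s) s)
    (hη2 : HasDerivAt η' η'' t)
    (hη0 : η' t ≠ 0)
    (hA : HasDerivAt A A' t)
    (hA0 : A t ≠ 0) :
    Tendsto (fun s : ℝ => (1 / Real.pi) * ((A s / A t) * η' t / (η t - η s)).im)
      (𝓝[≠] t)
      (𝓝 ((1 / Real.pi) * ((1 / 2) * (η'' / η' t).im - (A' / A t).im))) := by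
  have hlim := (Complex.continuous_im.tendsto _).comp
    (tendsto_neumann_kernel_add_inv_sub hη hη2 hη0 hA hA0)
  have him_inv (s : ℝ) : (1 / ((s : ℂ) - t)).im = 0 := by
    rw [← Complex.ofReal_sub, ← Complex.ofReal_one, ← Complex.ofReal_div, Complex.ofReal_im]
  have him_lim : (η'' / (2 * η' t) - A' / A t).im = 1 / 2 * (η'' / η' t).im - (A' / A t).im := by
    rw [Complex.sub_im, mul_comm, ← div_div, Complex.div_ofNat_im, one_div_mul_eq_div]
  simp only [Function.comp_def, Complex.add_im, him_inv, add_zero, him_lim] at hlim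
  exact hlim.const_mul _
end

section
/- Let η : ℝ → ℂ be twice differentiable at the point t with η′(t) ≠ 0, and let A : ℝ → ℂ be differentiable at t with A(t) ≠ 0. Then the kernel M(s,t) = (1/π)·Re[(A(s)/A(t))·η′(t)/(η(t)−η(s))] differs from −(1/(2π))·cot((s−t)/2) by a function that extends continuously to s = t; more precisely, lim_{s→t, s≠t} [ (1/π)·Re[(A(s)/A(t))·η′(t)/(η(t)−η(s))] + (1/(2π))·cot((s−t)/2) ] = (1/π)·[(1/2)·Re(η″(t)/η′(t)) − Re(A′(t)/A(t))]. -/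
/-!
Put `h = s - t`. The second-order Taylor expansion `η s - η t = h η'(t) + h² η''/2 + o(h²)`
gives `h⁻¹ + η'(t) / (η t - η s) → η'' / (2 η'(t))`, while
`(A s / A t - 1) · η'(t) / (η t - η s)` is a quotient of difference quotients and tends to
`-A'/A(t)`. The real part of `h⁻¹` is cancelled by the cotangent term, because
`cot(h/2)/2 - h⁻¹ → 0`.
-/

open Filter Topology Asymptotics

section Taylor

variable {E : Type*} [NormedAddCommGroup E] [NormedSpace ℝ E] {f f' : ℝ → E} {f'' : E} {t : ℝ}

theorem isLittleO_taylor_remainder_two (hf : ∀ᶠ s in 𝓝 t, HasDerivAt f (f' s) s)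
    (hf' : HasDerivAt f' f'' t) :
    (fun s => f s - f t - (s - t) • f' t - ((s - t) ^ 2 / 2) • f'') =o[𝓝 t]
      fun s => (s - t) ^ 2 := by
  obtain ⟨ε, hε, hball⟩ := Metric.eventually_nhds_iff_ball.1 hf
  have hnhds : 𝓝[Metric.ball t ε] t = 𝓝 t :=
    Metric.isOpen_ball.nhdsWithin_eq (Metric.mem_ball_self hε)
  have hderiv : ∀ s ∈ Metric.ball t ε,
      HasDerivWithinAt (fun s => f s - (s - t) • f' t - ((s - t) ^ 2 / 2) • f'')
        (f' s - f' t - (s - t) • f'') (Metric.ball t ε) s := by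
    intro s hs
    have hlin := ((hasDerivAt_id s).sub_const t).smul_const (f' t)
    have hquad := ((((hasDerivAt_id s).sub_const t).pow 2).div_const 2).smul_const f''
    convert (((hball s hs).sub hlin).sub hquad).hasDerivWithinAt using 1
    · rfl
    · simp
  -- mean value inequality: a derivative that is `o(s - t)` integrates to an `o((s - t)²)`
  have := (convex_ball t ε).isLittleO_pow_succ_real (Metric.mem_ball_self hε) hderiv
    (n := 1) (by simpa [hnhds] using hasDerivAt_iff_isLittleO.1 hf')
  rw [hnhds] at this
  convert this using 2 with s
  simp only [sub_self, zero_smul, zero_pow two_ne_zero, zero_div, sub_zero]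
  abel

theorem tendsto_taylor_remainder_one_div_sq (hf : ∀ᶠ s in 𝓝 t, HasDerivAt f (f' s) s)
    (hf' : HasDerivAt f' f'' t) :
    Tendsto (fun s => ((s - t) ^ 2)⁻¹ • (f s - f t - (s - t) • f' t)) (𝓝[≠] t)
      (𝓝 ((2 : ℝ)⁻¹ • f'')) := by
  have h := ((isLittleO_taylor_remainder_two hf hf').tendsto_inv_smul_nhds_zero.mono_left
    (nhdsWithin_le_nhds (s := {t}ᶜ))).add_const ((2 : ℝ)⁻¹ • f'')
  rw [zero_add] at h
  refine h.congr' (eventually_nhdsWithin_of_forall fun s (hs : s ≠ t) => ?_)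
  have hsq : (s - t) ^ 2 ≠ 0 := pow_ne_zero 2 (sub_ne_zero.2 hs)
  rw [smul_sub _ (f s - f t - _), smul_smul, div_eq_mul_inv, ← mul_assoc, inv_mul_cancel₀ hsq,
    one_mul]
  abel

end Taylor

theorem Real.tendsto_cot_sub_inv : Tendsto (fun u => Real.cot u - u⁻¹) (𝓝[≠] 0) (𝓝 0) := by
  have hnum : Tendsto (fun u : ℝ => (u ^ 2)⁻¹ * (u * Real.cos u - Real.sin u)) (𝓝[≠] 0)
      (𝓝 0) := by
    have hf : ∀ u : ℝ, HasDerivAt (fun u => u * Real.cos u - Real.sin u) (-(u * Real.sin u)) u :=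
      fun u => (((hasDerivAt_id' u).mul (Real.hasDerivAt_cos u)).sub
        (Real.hasDerivAt_sin u)).congr_deriv (by ring)
    have hf' : HasDerivAt (fun u => -(u * Real.sin u)) 0 0 :=
      ((hasDerivAt_id' 0).mul (Real.hasDerivAt_sin 0)).neg.congr_deriv (by simp)
    simpa using tendsto_taylor_remainder_one_div_sq (Eventually.of_forall hf) hf'
  have hsinc : Tendsto Real.sinc (𝓝[≠] 0) (𝓝 1) :=
    Real.sinc_zero ▸ (Real.continuous_sinc.tendsto 0).mono_left nhdsWithin_le_nhds
  have hquot := hnum.div hsinc one_ne_zero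
  rw [zero_div] at hquot
  refine hquot.congr' ?_
  filter_upwards [self_mem_nhdsWithin, hsinc.eventually_ne one_ne_zero] with u (hu : u ≠ 0) hsin
  rw [Real.sinc_of_ne_zero hu] at hsin
  have hsin' : Real.sin u ≠ 0 := by simpa [hu] using hsin
  rw [Pi.div_apply, Real.sinc_of_ne_zero hu, Real.cot_eq_cos_div_sin]
  field_simp

theorem Real.tendsto_half_mul_cot_half_sub_inv (t : ℝ) :
    Tendsto (fun s => 1 / 2 * Real.cot ((s - t) / 2) - (s - t)⁻¹) (𝓝[≠] t) (𝓝 0) := by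
  have hhalf : Tendsto (fun s => (s - t) / 2) (𝓝[≠] t) (𝓝[≠] 0) := by
    refine Tendsto.inf ?_ (tendsto_principal_principal.2 fun s (hs : s ≠ t) => ?_)
    · simpa using ((continuous_sub_right t).div_const 2).tendsto t
    · simpa [sub_eq_zero] using hs
  convert (Real.tendsto_cot_sub_inv.comp hhalf).const_mul (1 / 2) using 2 with s
  · rw [Function.comp_apply, inv_div]
    ring
  · simp

theorem tendsto_sub_div_sub_of_hasDerivAt {𝕜 F : Type*} [NontriviallyNormedField 𝕜]
    [NormedField F] [NormedAlgebra 𝕜 F] {f g : 𝕜 → F} {f' g' : F} {t : 𝕜}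
    (hf : HasDerivAt f f' t) (hg : HasDerivAt g g' t) (hg' : g' ≠ 0) :
    Tendsto (fun s => (f s - f t) / (g s - g t)) (𝓝[≠] t) (𝓝 (f' / g')) := by
  refine ((hasDerivAt_iff_tendsto_slope.1 hf).div (hasDerivAt_iff_tendsto_slope.1 hg) hg').congr'
    (eventually_nhdsWithin_of_forall fun s (hs : s ≠ t) => ?_)
  rw [Pi.div_apply, slope_def_module, slope_def_module, Algebra.smul_def, Algebra.smul_def,
    mul_div_mul_left]
  simpa [sub_eq_zero] using hs

section CauchyKernel

variable {η η' : ℝ → ℂ} {η'' : ℂ} {t : ℝ}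

theorem Complex.tendsto_inv_add_deriv_div_sub (hη : ∀ᶠ s in 𝓝 t, HasDerivAt η (η' s) s)
    (hη' : HasDerivAt η' η'' t) (hη'0 : η' t ≠ 0) :
    Tendsto (fun s : ℝ => ((s - t : ℝ) : ℂ)⁻¹ + η' t / (η t - η s)) (𝓝[≠] t)
      (𝓝 (η'' / (2 * η' t))) := by
  have hslope := hasDerivAt_iff_tendsto_slope.1 hη.self_of_nhds
  convert ((tendsto_taylor_remainder_one_div_sq hη hη').div hslope hη'0).congr' ?_ using 2
  · rw [Complex.real_smul]
    push_cast
    ring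
  filter_upwards [self_mem_nhdsWithin, hslope.eventually_ne hη'0] with s (hs : s ≠ t) hne
  have hst : ((s - t : ℝ) : ℂ) ≠ 0 := by simpa [sub_eq_zero] using hs
  have hD : η s - η t ≠ 0 := fun h => hne (by simp [slope_def_module, h])
  have hD' : η t - η s ≠ 0 := fun h => hD (by linear_combination -h)
  rw [Pi.div_apply, slope_def_module, Complex.real_smul, Complex.real_smul, Complex.real_smul]
  push_cast at hst ⊢
  field_simp
  ring

theorem Complex.tendsto_inv_add_mul_deriv_div_sub {A : ℝ → ℂ} {A' : ℂ}
    (hη : ∀ᶠ s in 𝓝 t, HasDerivAt η (η' s) s) (hη' : HasDerivAt η' η'' t) (hη'0 : η' t ≠ 0)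
    (hA : HasDerivAt A A' t) (hA0 : A t ≠ 0) :
    Tendsto (fun s : ℝ => ((s - t : ℝ) : ℂ)⁻¹ + A s / A t * η' t / (η t - η s)) (𝓝[≠] t)
      (𝓝 (η'' / (2 * η' t) - A' / A t)) := by
  have hweight := (tendsto_sub_div_sub_of_hasDerivAt hA hη.self_of_nhds hη'0).mul_const
    (η' t / A t)
  convert (Complex.tendsto_inv_add_deriv_div_sub hη hη' hη'0).sub hweight using 2 with s
  · rw [← neg_sub (η s)]
    field_simp
    ring
  · field_simp

end CauchyKernel

/-- The kernel `M(s,t) = (1/π)·Re[(A(s)/A(t))·η′(t)/(η(t)−η(s))]` differs from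
`−(1/(2π))·cot((s−t)/2)` by a function extending continuously to `s = t`, with limit
`(1/π)·[(1/2)·Re(η″(t)/η′(t)) − Re(A′(t)/A(t))]`. -/
theorem singular_kernel_M_diagonal_limit
    (η η' : ℝ → ℂ) (η'' : ℂ) (A : ℝ → ℂ) (A' : ℂ) (t : ℝ)
    (hη : ∀ᶠ s in 𝓝 t, HasDerivAt η (η' s) s)
    (hη2 : HasDerivAt η' η'' t)
    (hη0 : η' t ≠ 0)
    (hA : HasDerivAt A A' t)
    (hA0 : A t ≠ 0) :
    Tendsto (fun s : ℝ =>
        (1 / Real.pi) * ((A s / A t) * η' t / (η t - η s)).re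
          + (1 / (2 * Real.pi)) * Real.cot ((s - t) / 2))
      (𝓝[≠] t)
      (𝓝 ((1 / Real.pi) * ((1 / 2) * (η'' / η' t).re - (A' / A t).re))) := by
  have hre := (Complex.continuous_re.tendsto _).comp
    (Complex.tendsto_inv_add_mul_deriv_div_sub hη hη2 hη0 hA hA0)
  convert ((hre.add (Real.tendsto_half_mul_cot_half_sub_inv t)).const_mul (1 / Real.pi))
    using 2 with s
  · simp only [Function.comp_apply, Complex.add_re, ← Complex.ofReal_inv, Complex.ofReal_re]
    ring
  · rw [add_zero, Complex.sub_re, mul_comm (2 : ℂ), ← div_div, Complex.div_ofNat_re]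
    ring
end
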